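/- arXiv:1312.4087 — 2 statements merged into one kernel-verified Lean document; each statement's English description precedes it below -/
import Mathlib

section
/- Uniform approximation bound (Lemma 4, inequality (6.16)). Let {φ_k}_{k≥0} satisfy the basis condition Σ_{k=0}^l φ_k(t)² ≤ C_φ²(l+1) for all t ∈ [0,1] and l ≥ 0. Let f(t) = Σ_{k=1}^∞ a_k φ_k(t) with coefficients satisfying Σ_{k=0}^∞ |a_k|^ν (k+1)^{νr'} ≤ C_a^ν, r' = r + 1/2 − 1/ν, for C_a > 0, 1 ≤ ν < ∞, r > min(1/2,1/ν), and suppose r* = min(r,r') ≥ 2 (so in particular r* > 3/2). Then for the partial sum f_J(t) = Σ_{k=1}^J a_kφ_k(t) and any J > 1, sup_{t∈[0,1]} |f(t) − f_J(t)| ≤ C·C_a C_φ (J+1)^{−(r*−1/2)} for an absolute constant C. -/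
/-!
Write the tail as `∑_{k>J} (a_k (k+1)) · (φ_k(t) / (k+1))` and apply Cauchy–Schwarz.
Abel summation against the basis condition gives `∑_{k>J} φ_k(t)² / (k+1)² ≤ 3 C_φ² / (J+1)`.
For the coefficients, `x_k = |a_k| (k+1)^{r'}` satisfies `∑ x_k^ν ≤ C_a^ν` and
`a_k² (k+1)² = x_k² (k+1)^{2-2r'}`; for `ν ≤ 2` bound `x_k ≤ C_a` termwise, for `ν > 2` use Hölder
with exponents `ν/2` and `ν/(ν-2)`. Either way `∑_{k>J} a_k² (k+1)² ≤ C_a² (J+1)^{2-2r*}`.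
The partial sums of `|a_k φ_k(t)|` are thus bounded by `2 C_a C_φ (J+1)^{-(r*-1/2)}`, so the tail
converges absolutely and obeys the same bound.
-/

open Finset Real

lemma abs_tsum_le_of_sum_range_abs_le {f : ℕ → ℝ} {M : ℝ}
    (h : ∀ N, ∑ k ∈ range N, |f k| ≤ M) : |∑' k, f k| ≤ M := by
  have hsum : Summable fun k => ‖f k‖ := summable_of_sum_range_le (fun _ => abs_nonneg _) h
  calc |∑' k, f k| ≤ ∑' k, |f k| := norm_tsum_le_tsum_norm hsum
    _ ≤ M := Real.tsum_le_of_sum_range_le (fun _ => abs_nonneg _) h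

lemma sum_abs_mul_le_sqrt_mul_sqrt {ι : Type*} (s : Finset ι) (f g w : ι → ℝ)
    (hw : ∀ i ∈ s, w i ≠ 0) :
    ∑ i ∈ s, |f i * g i| ≤ √(∑ i ∈ s, f i ^ 2 * w i ^ 2) * √(∑ i ∈ s, g i ^ 2 / w i ^ 2) := by
  have hfg : ∀ i ∈ s, |f i * g i| = |f i * w i| * |g i / w i| := fun i hi => by
    rw [← abs_mul]; field_simp [hw i hi]
  rw [sum_congr rfl hfg]
  simpa only [sq_abs, mul_pow, div_pow] using
    Real.sum_mul_le_sqrt_mul_sqrt s (fun i => |f i * w i|) (fun i => |g i / w i|)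

lemma div_sq_sub_div_sq_le {S B x : ℝ} (hx : 0 < x) (hB : 0 ≤ B) (hS : S ≤ B * x) :
    S / x ^ 2 - S / (x + 1) ^ 2 ≤ 2 * B * (1 / x - 1 / (x + 1)) := by
  have hx1 : 0 < x + 1 := by linarith
  rw [div_sub_div _ _ (by positivity) (by positivity), div_sub_div _ _ hx.ne' hx1.ne',
    mul_div_assoc', div_le_div_iff₀ (by positivity) (by positivity)]
  nlinarith [mul_le_mul_of_nonneg_right hS (by positivity : (0 : ℝ) ≤ (2 * x + 1) * (x * (x + 1))),
    mul_nonneg (mul_nonneg hB (sq_nonneg x)) hx1.le]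

lemma sum_range_div_sq_tail_le {b : ℕ → ℝ} (hb : ∀ k, 0 ≤ b k) {B : ℝ}
    (hB : ∀ m : ℕ, ∑ k ∈ range m, b k ≤ B * m) {n : ℕ} (hn : 0 < n) (N : ℕ) :
    ∑ k ∈ range N, b (k + n) / (((k + n : ℕ) : ℝ) + 1) ^ 2 ≤ 3 * B / n := by
  have hB0 : 0 ≤ B := by simpa using (hb 0).trans (by simpa using hB 1)
  have hn' : (0 : ℝ) < n := by exact_mod_cast hn
  have abel : ∀ M : ℕ, ∑ k ∈ range M, b (k + n) / (((k + n : ℕ) : ℝ) + 1) ^ 2 ≤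
      (∑ k ∈ range (n + M), b k) / ((n + M : ℕ) : ℝ) ^ 2 +
        2 * B * (1 / (n : ℝ) - 1 / ((n + M : ℕ) : ℝ)) := by
    intro M
    induction M with
    | zero => simpa using div_nonneg (sum_nonneg fun k _ => hb k) (sq_nonneg (n : ℝ))
    | succ M ih =>
      have hstep := div_sq_sub_div_sq_le (by positivity) hB0 (hB (n + M))
      rw [sum_range_succ, ← add_assoc, sum_range_succ, add_comm M n]
      push_cast at ih hstep ⊢
      rw [add_div]
      linarith
  have hS : (∑ k ∈ range (n + N), b k) / ((n + N : ℕ) : ℝ) ^ 2 ≤ B / n := by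
    have hnN : (0 : ℝ) < ((n + N : ℕ) : ℝ) := by positivity
    rw [div_le_div_iff₀ (by positivity) hn']
    have : (n : ℝ) ≤ ((n + N : ℕ) : ℝ) := by exact_mod_cast Nat.le_add_right n N
    nlinarith [hB (n + N), mul_le_mul_of_nonneg_left this (mul_nonneg hB0 hnN.le)]
  have htel : 1 / (n : ℝ) - 1 / ((n + N : ℕ) : ℝ) ≤ 1 / n := by
    linarith [one_div_nonneg.mpr (Nat.cast_nonneg (α := ℝ) (n + N))]
  calc _ ≤ _ := abel N
    _ ≤ B / n + 2 * B * (1 / n) := add_le_add hS (mul_le_mul_of_nonneg_left htel (by positivity))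
    _ = 3 * B / n := by ring

lemma add_one_rpow_neg_le_sub {y s : ℝ} (hy : 0 < y) (hs : 2 ≤ s) :
    (y + 1) ^ (-s) ≤ y ^ (1 - s) - (y + 1) ^ (1 - s) := by
  have hy1 : 0 < y + 1 := by linarith
  have hY := rpow_pos_of_pos hy s
  have hZ := rpow_pos_of_pos hy1 s
  have hbern : 1 + s * (1 / y) ≤ (1 + 1 / y) ^ s :=
    one_add_mul_self_le_rpow_one_add (by linarith [one_div_pos.mpr hy]) (by linarith)
  rw [show 1 + 1 / y = (y + 1) / y by field_simp, div_rpow hy1.le hy.le, le_div_iff₀ hY] at hbern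
  field_simp at hbern
  have key : (y + 2) * y ^ s ≤ y * (y + 1) ^ s := by nlinarith
  rw [rpow_neg hy1.le, rpow_sub hy, rpow_sub hy1, rpow_one, rpow_one,
    div_sub_div _ _ hY.ne' hZ.ne', inv_eq_one_div, div_le_div_iff₀ hZ (by positivity)]
  nlinarith [mul_le_mul_of_nonneg_left key hZ.le]

lemma sum_range_rpow_neg_tail_le {s : ℝ} (hs : 2 ≤ s) {n : ℕ} (hn : 0 < n) (N : ℕ) :
    ∑ k ∈ range N, (((k + n : ℕ) : ℝ) + 1) ^ (-s) ≤ (n : ℝ) ^ (1 - s) := by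
  calc ∑ k ∈ range N, (((k + n : ℕ) : ℝ) + 1) ^ (-s)
      ≤ ∑ k ∈ range N, ((((k + n : ℕ) : ℝ)) ^ (1 - s) - (((k + 1 + n : ℕ) : ℝ)) ^ (1 - s)) := by
        gcongr with k
        have hpos : (0 : ℝ) < ((k + n : ℕ) : ℝ) := by positivity
        simpa [add_right_comm k 1 n] using add_one_rpow_neg_le_sub hpos hs
    _ = (n : ℝ) ^ (1 - s) - (((N + n : ℕ) : ℝ)) ^ (1 - s) := by
        simpa using sum_range_sub' (fun k => (((k + n : ℕ) : ℝ)) ^ (1 - s)) N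
    _ ≤ (n : ℝ) ^ (1 - s) := sub_le_self _ (by positivity)

lemma sum_sq_mul_le_of_le_two {ι : Type*} (s : Finset ι) {x w : ι → ℝ} {A W ν : ℝ}
    (hν : ν ≤ 2) (hx : ∀ i ∈ s, 0 ≤ x i) (hxA : ∀ i ∈ s, x i ≤ A) (hw : ∀ i ∈ s, 0 ≤ w i)
    (hwW : ∀ i ∈ s, w i ≤ W) :
    ∑ i ∈ s, x i ^ 2 * w i ≤ A ^ (2 - ν) * W * ∑ i ∈ s, x i ^ ν := by
  rw [mul_sum]
  refine sum_le_sum fun i hi => ?_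
  have hsplit : x i ^ 2 = x i ^ ν * x i ^ (2 - ν) := by
    rw [← rpow_add' (hx i hi) (by norm_num), add_sub_cancel, rpow_two]
  rw [hsplit, mul_comm (A ^ (2 - ν) * W), mul_assoc]
  refine mul_le_mul_of_nonneg_left ?_ (rpow_nonneg (hx i hi) ν)
  exact mul_le_mul (rpow_le_rpow (hx i hi) (hxA i hi) (by linarith)) (hwW i hi) (hw i hi)
    (rpow_nonneg ((hx i hi).trans (hxA i hi)) _)

lemma sum_sq_mul_le_of_two_lt {ι : Type*} (s : Finset ι) {x w : ι → ℝ} {ν : ℝ}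
    (hν : 2 < ν) (hx : ∀ i ∈ s, 0 ≤ x i) (hw : ∀ i ∈ s, 0 ≤ w i) :
    ∑ i ∈ s, x i ^ 2 * w i ≤
      (∑ i ∈ s, x i ^ ν) ^ (2 / ν) * (∑ i ∈ s, w i ^ (ν / (ν - 2))) ^ ((ν - 2) / ν) := by
  have hpq : HolderConjugate (ν / 2) (ν / (ν - 2)) := by
    rw [holderConjugate_iff]
    refine ⟨by linarith, ?_⟩
    field_simp
    ring
  have hpow : ∀ i ∈ s, (x i ^ 2) ^ (ν / 2) = x i ^ ν := fun i hi => by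
    rw [← rpow_natCast, ← rpow_mul (hx i hi)]
    norm_num
    field_simp
  have h := inner_le_Lp_mul_Lq_of_nonneg s hpq (fun i hi => sq_nonneg (x i)) hw
  rwa [sum_congr rfl hpow, one_div_div, one_div_div] at h

lemma sum_sq_mul_rpow_tail_le {y : ℕ → ℝ} (hy : ∀ k, 0 ≤ y k) {A ν r r' : ℝ} (hA : 0 ≤ A)
    (hν : 0 < ν) (hyA : ∀ N, ∑ k ∈ range N, y k ^ ν ≤ A ^ ν) (hr' : r' = r + 1 / 2 - 1 / ν)
    (hρ : 2 ≤ min r r') {n : ℕ} (hn : 0 < n) (N : ℕ) :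
    ∑ k ∈ range N, y k ^ 2 * (((k + n : ℕ) : ℝ) + 1) ^ (2 - 2 * r') ≤
      A ^ 2 * (n : ℝ) ^ (2 - 2 * min r r') := by
  have hr'2 : 2 ≤ r' := hρ.trans (min_le_right _ _)
  have hn1 : (1 : ℝ) ≤ n := by exact_mod_cast hn
  have hw : ∀ k ∈ range N, 0 ≤ (((k + n : ℕ) : ℝ) + 1) ^ (2 - 2 * r') := fun k _ => by positivity
  rcases le_or_gt ν 2 with hν2 | hν2
  · have hyA' : ∀ k, y k ≤ A := fun k =>
      (rpow_le_rpow_iff (hy k) hA hν).mp ((single_le_sum (f := fun k => y k ^ ν)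
        (fun j _ => rpow_nonneg (hy j) ν) (self_mem_range_succ k)).trans (hyA (k + 1)))
    have hwW : ∀ k ∈ range N,
        (((k + n : ℕ) : ℝ) + 1) ^ (2 - 2 * r') ≤ (n : ℝ) ^ (2 - 2 * min r r') := fun k _ => by
        refine (rpow_le_rpow_of_nonpos (by positivity) ?_ (by linarith)).trans
          (rpow_le_rpow_of_exponent_le hn1 (by linarith [min_le_right r r']))
        push_cast
        linarith [(k.cast_nonneg : (0 : ℝ) ≤ k)]
    calc _ ≤ A ^ (2 - ν) * (n : ℝ) ^ (2 - 2 * min r r') * ∑ k ∈ range N, y k ^ ν :=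
          sum_sq_mul_le_of_le_two _ hν2 (fun k _ => hy k) (fun k _ => hyA' k) hw hwW
      _ ≤ A ^ (2 - ν) * (n : ℝ) ^ (2 - 2 * min r r') * A ^ ν := by gcongr; exact hyA N
      _ = A ^ 2 * (n : ℝ) ^ (2 - 2 * min r r') := by
          rw [mul_right_comm, ← rpow_add' hA (by norm_num), sub_add_cancel, rpow_two]
  · set q := ν / (ν - 2)
    set s := (2 * r' - 2) * q
    have hq : 1 < q := by rw [one_lt_div (by linarith)]; linarith
    have hs : 2 ≤ s := by nlinarith
    have hwq : ∀ k,
        ((((k + n : ℕ) : ℝ) + 1) ^ (2 - 2 * r')) ^ q = (((k + n : ℕ) : ℝ) + 1) ^ (-s) := fun k => by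
      rw [← rpow_mul (by positivity)]
      congr 1
      ring
    have hexp : (1 - s) * ((ν - 2) / ν) = 2 - 2 * r := by
      simp only [s, q, hr']
      field_simp
      ring
    calc _ ≤ (∑ k ∈ range N, y k ^ ν) ^ (2 / ν) *
          (∑ k ∈ range N, ((((k + n : ℕ) : ℝ) + 1) ^ (2 - 2 * r')) ^ q) ^ ((ν - 2) / ν) :=
          sum_sq_mul_le_of_two_lt _ hν2 (fun k _ => hy k) hw
      _ ≤ (A ^ ν) ^ (2 / ν) * ((n : ℝ) ^ (1 - s)) ^ ((ν - 2) / ν) := by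
          simp only [hwq]
          gcongr
          · exact sum_nonneg fun k _ => rpow_nonneg (hy k) ν
          · exact hyA N
          · exact sum_range_rpow_neg_tail_le hs hn N
      _ = A ^ 2 * (n : ℝ) ^ (2 - 2 * r) := by
          rw [← rpow_mul hA, ← rpow_mul (by positivity), hexp, mul_div_cancel₀ _ hν.ne', rpow_two]
      _ ≤ A ^ 2 * (n : ℝ) ^ (2 - 2 * min r r') := by
          gcongr
          exact min_le_left r r'

lemma sq_mul_sq_eq_sq_mul_rpow {c : ℝ} (hc : 0 < c) (a r : ℝ) :
    a ^ 2 * c ^ 2 = (|a| * c ^ r) ^ 2 * c ^ (2 - 2 * r) := by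
  rw [mul_pow, sq_abs, mul_assoc, ← rpow_natCast (c ^ r), ← rpow_mul hc.le, ← rpow_add hc,
    show r * (2 : ℕ) + (2 - 2 * r) = (2 : ℕ) by push_cast; ring, rpow_natCast]

lemma sum_range_sq_mul_sq_tail_le {a : ℕ → ℝ} {A ν r : ℝ} (hA : 0 ≤ A) (hν : 0 < ν)
    (hsum : Summable fun k : ℕ => |a k| ^ ν * ((k : ℝ) + 1) ^ (ν * (r + 1 / 2 - 1 / ν)))
    (htsum : ∑' k : ℕ, |a k| ^ ν * ((k : ℝ) + 1) ^ (ν * (r + 1 / 2 - 1 / ν)) ≤ A ^ ν)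
    (hρ : 2 ≤ min r (r + 1 / 2 - 1 / ν)) {n : ℕ} (hn : 0 < n) (N : ℕ) :
    ∑ k ∈ range N, a (k + n) ^ 2 * (((k + n : ℕ) : ℝ) + 1) ^ 2 ≤
      A ^ 2 * (n : ℝ) ^ (2 - 2 * min r (r + 1 / 2 - 1 / ν)) := by
  set r' := r + 1 / 2 - 1 / ν
  set x : ℕ → ℝ := fun m => |a m| * ((m : ℝ) + 1) ^ r'
  have hxν : ∀ m, x m ^ ν = |a m| ^ ν * ((m : ℝ) + 1) ^ (ν * r') := fun m => by
    rw [mul_rpow (abs_nonneg _) (by positivity), ← rpow_mul (by positivity), mul_comm r']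
  have hxA : ∀ N, ∑ k ∈ range N, x (k + n) ^ ν ≤ A ^ ν := fun N =>
    calc ∑ k ∈ range N, x (k + n) ^ ν ≤ ∑ m ∈ range (n + N), x m ^ ν := by
          rw [sum_range_add]
          simp only [add_comm _ n]
          exact le_add_of_nonneg_left (sum_nonneg fun m _ => by positivity)
      _ ≤ A ^ ν := by
          simp only [hxν]
          exact (hsum.sum_le_tsum _ fun m _ => by positivity).trans htsum
  calc _ = ∑ k ∈ range N, x (k + n) ^ 2 * (((k + n : ℕ) : ℝ) + 1) ^ (2 - 2 * r') :=
        sum_congr rfl fun k _ => sq_mul_sq_eq_sq_mul_rpow (by positivity) _ _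
    _ ≤ _ := sum_sq_mul_rpow_tail_le (fun k => by positivity) hA hν hxA rfl hρ hn N

lemma sqrt_mul_sqrt_le_rpow {A C x ρ : ℝ} (hA : 0 ≤ A) (hC : 0 ≤ C) (hx : 0 < x) :
    √(A ^ 2 * x ^ (2 - 2 * ρ)) * √(3 * C ^ 2 / x) ≤ 2 * A * C * x ^ (-(ρ - 1 / 2)) := by
  have hsq : (x ^ (-(ρ - 1 / 2))) ^ 2 = x ^ (2 - 2 * ρ) / x := by
    rw [← rpow_natCast, ← rpow_mul hx.le, ← rpow_sub_one hx.ne']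
    norm_num
    ring_nf
  rw [← sqrt_mul (by positivity), sqrt_le_left (by positivity), mul_pow, mul_pow, hsq]
  have hnonneg : 0 ≤ A ^ 2 * C ^ 2 * (x ^ (2 - 2 * ρ) / x) := by positivity
  have hrw : A ^ 2 * x ^ (2 - 2 * ρ) * (3 * C ^ 2 / x) =
      3 * (A ^ 2 * C ^ 2 * (x ^ (2 - 2 * ρ) / x)) := by ring
  linarith

/-- **Uniform approximation bound** (Lemma 4, inequality (6.16)).
There is an absolute constant `C` such that: if the basis satisfies
`∑_{k=0}^l φ_k(t)² ≤ C_φ²(l+1)` on `[0,1]`, the coefficients satisfy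
`∑_k |a_k|^ν (k+1)^{ν r'} ≤ C_a^ν` with `r' = r + 1/2 - 1/ν` and `r* = min(r,r') ≥ 2`,
then for `f = ∑_{k≥1} a_k φ_k` and its partial sum `f_J`, for all `J > 1`,
`sup_{t∈[0,1]} |f(t) − f_J(t)| ≤ C · C_a C_φ (J+1)^{-(r*-1/2)}`. -/
theorem stmt_10 :
    ∃ C : ℝ, 0 < C ∧
      ∀ (φ : ℕ → ℝ → ℝ) (a : ℕ → ℝ) (Ca Cφ ν r : ℝ),
        0 < Ca → 0 < Cφ → 1 ≤ ν → r > min (1/2) (1/ν) →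
        (∀ t ∈ Set.Icc (0:ℝ) 1, ∀ l : ℕ,
            ∑ k ∈ Finset.range (l + 1), (φ k t) ^ 2 ≤ Cφ ^ 2 * ((l : ℝ) + 1)) →
        Summable (fun k : ℕ => |a k| ^ ν * ((k : ℝ) + 1) ^ (ν * (r + 1/2 - 1/ν))) →
        (∑' k : ℕ, |a k| ^ ν * ((k : ℝ) + 1) ^ (ν * (r + 1/2 - 1/ν))) ≤ Ca ^ ν →
        2 ≤ min r (r + 1/2 - 1/ν) →
        ∀ J : ℕ, 1 < J → ∀ t ∈ Set.Icc (0:ℝ) 1,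
          |∑' k : ℕ, a (k + J + 1) * φ (k + J + 1) t|
            ≤ C * Ca * Cφ * ((J : ℝ) + 1) ^ (-(min r (r + 1/2 - 1/ν) - 1/2)) := by
  refine ⟨2, two_pos, fun φ a Ca Cφ ν r hCa hCφ hν _ hφ hsum htsum hρ J _ t ht => ?_⟩
  have hn : 0 < J + 1 := J.succ_pos
  have hbasis : ∀ m : ℕ, ∑ k ∈ range m, φ k t ^ 2 ≤ Cφ ^ 2 * m
    | 0 => by simp
    | l + 1 => by exact_mod_cast hφ t ht l
  apply abs_tsum_le_of_sum_range_abs_le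
  intro N
  calc ∑ k ∈ range N, |a (k + J + 1) * φ (k + J + 1) t|
      ≤ √(∑ k ∈ range N, a (k + (J + 1)) ^ 2 * (((k + (J + 1) : ℕ) : ℝ) + 1) ^ 2) *
          √(∑ k ∈ range N, φ (k + (J + 1)) t ^ 2 / (((k + (J + 1) : ℕ) : ℝ) + 1) ^ 2) :=
        sum_abs_mul_le_sqrt_mul_sqrt _ _ _ _ fun k _ => by positivity
    _ ≤ √(Ca ^ 2 * ((J + 1 : ℕ) : ℝ) ^ (2 - 2 * min r (r + 1 / 2 - 1 / ν))) *
          √(3 * Cφ ^ 2 / ((J + 1 : ℕ) : ℝ)) := by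
        gcongr
        · exact sum_range_sq_mul_sq_tail_le hCa.le (by linarith) hsum htsum hρ hn N
        · exact sum_range_div_sq_tail_le (fun _ => sq_nonneg _) hbasis hn N
    _ ≤ 2 * Ca * Cφ * ((J + 1 : ℕ) : ℝ) ^ (-(min r (r + 1 / 2 - 1 / ν) - 1 / 2)) :=
        sqrt_mul_sqrt_le_rpow hCa.le hCφ.le (by positivity)
    _ = 2 * Ca * Cφ * ((J : ℝ) + 1) ^ (-(min r (r + 1 / 2 - 1 / ν) - 1 / 2)) := by push_cast; rfl
end

section
/- Cone condition for the block-LASSO minimizer (inequality (6.11)). Let B ∈ ℝ^{n×p(L+1)}, Y ∈ ℝ^n, δ̂ > 0, and let a ∈ ℝ^{p(L+1)} be any vector, with block partition of ℝ^{p(L+1)} as in the block norm. Let â be a minimizer over α of n^{−1}‖Y − Bα‖₂² + 2δ̂‖α‖_block. If (2/n)|⟨â − a, B^T(Y − Ba)⟩| ≤ δ̂‖â − a‖_block, then Σ_{(j,l)∉J₀} ‖(a − â)_{jl}‖₂ ≤ 3 Σ_{(j,l)∈J₀} ‖(a − â)_{jl}‖₂, where J₀ = {(j,l) : ‖a_{jl}‖₂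 ≠ 0} is the set of nonzero blocks of a. -/
open Matrix
open scoped Classical

/-- The `ℓ²` norm of block `l` of the coefficient vector `α ∈ ℝ^{p(L+1)}`:
block `0` of covariate `j` is the single coordinate `α_{j0}`, and block `l ≥ 1`
consists of the `d` coordinates `α_{j,d(l-1)+1}, …, α_{j,dl}`. -/
noncomputable def blockAt (p L d : ℕ) (α : Fin p × Fin (L + 1) → ℝ)
    (j : Fin p) (l : ℕ) : ℝ :=
  Real.sqrt (∑ k ∈ Finset.univ.filter
      (fun k : Fin (L + 1) =>
        (if (k : ℕ) = 0 then 0 else ((k : ℕ) - 1) / d + 1) = l),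
    (α (j, k)) ^ 2)

/-- The block norm `‖α‖_block = ∑_{j=1}^p ∑_{l=0}^M ‖α_{jl}‖₂`. -/
noncomputable def blockNormP (p L d M : ℕ) (α : Fin p × Fin (L + 1) → ℝ) : ℝ :=
  ∑ j : Fin p, ∑ l ∈ Finset.range (M + 1), blockAt p L d α j l

/-!
Comparing the objective at `â` with its value at `a` and absorbing the cross term by the
hypothesis on `⟨â - a, Bᵀ(Y - Ba)⟩` gives `2‖â‖_block ≤ ‖â - a‖_block + 2‖a‖_block`.
Split both block norms over `J₀` and its complement: off `J₀` the blocks of `â` are those of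
`â - a`, and on `J₀` the triangle inequality gives `‖a_{jl}‖ ≤ ‖â_{jl}‖ + ‖(a - â)_{jl}‖`.
-/

open Finset

lemma Real.sqrt_sum_sq_eq_norm {ι : Type*} (s : Finset ι) (f : ι → ℝ) :
    √(∑ i ∈ s, f i ^ 2) = ‖(WithLp.toLp 2 (fun i : s => f i) : EuclideanSpace ℝ s)‖ := by
  rw [EuclideanSpace.norm_eq, ← s.sum_coe_sort]
  simp only [Real.norm_eq_abs, sq_abs]

lemma Real.sqrt_sum_sq_add_le {ι : Type*} (s : Finset ι) (f g : ι → ℝ) :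
    √(∑ i ∈ s, (f i + g i) ^ 2) ≤ √(∑ i ∈ s, f i ^ 2) + √(∑ i ∈ s, g i ^ 2) := by
  simp only [Real.sqrt_sum_sq_eq_norm]
  exact norm_add_le (WithLp.toLp 2 (fun i : s => f i) : EuclideanSpace ℝ s)
    (WithLp.toLp 2 (fun i : s => g i))

lemma blockAt_add_le (p L d : ℕ) (α β : Fin p × Fin (L + 1) → ℝ) (j : Fin p) (l : ℕ) :
    blockAt p L d (α + β) j l ≤ blockAt p L d α j l + blockAt p L d β j l :=
  Real.sqrt_sum_sq_add_le _ _ _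

lemma blockAt_neg (p L d : ℕ) (α : Fin p × Fin (L + 1) → ℝ) (j : Fin p) (l : ℕ) :
    blockAt p L d (-α) j l = blockAt p L d α j l := by
  simp only [blockAt, Pi.neg_apply, neg_sq]

lemma sum_sq_sub_mulVec_eq {m ι : Type*} [Fintype m] [Fintype ι]
    (B : Matrix m ι ℝ) (Y : m → ℝ) (a b : ι → ℝ) :
    ∑ i, (Y i - (B *ᵥ b) i) ^ 2
      = ∑ i, (Y i - (B *ᵥ a) i) ^ 2 - 2 * ((b - a) ⬝ᵥ (Bᵀ *ᵥ (Y - B *ᵥ a)))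
        + ∑ i, ((B *ᵥ (b - a)) i) ^ 2 := by
  rw [dotProduct_mulVec, vecMul_transpose, dotProduct, mul_sum,
    ← sum_sub_distrib, ← sum_add_distrib]
  refine sum_congr rfl fun i _ => ?_
  simp only [mulVec_sub, Pi.sub_apply]
  ring

lemma two_mul_penalty_le_of_minimizer {m ι : Type*} [Fintype m] [Fintype ι]
    (B : Matrix m ι ℝ) (Y : m → ℝ) (P : (ι → ℝ) → ℝ) {c δ : ℝ} (hc : 0 ≤ c) (hδ : 0 < δ)
    (a b : ι → ℝ)
    (hmin : c * ∑ i, (Y i - (B *ᵥ b) i) ^ 2 + 2 * δ * P b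
      ≤ c * ∑ i, (Y i - (B *ᵥ a) i) ^ 2 + 2 * δ * P a)
    (hnoise : 2 * c * |(b - a) ⬝ᵥ (Bᵀ *ᵥ (Y - B *ᵥ a))| ≤ δ * P (b - a)) :
    2 * P b ≤ P (b - a) + 2 * P a := by
  rw [sum_sq_sub_mulVec_eq B Y a b] at hmin
  have hfit : 0 ≤ c * ∑ i, ((B *ᵥ (b - a)) i) ^ 2 := by positivity
  have hcross := mul_le_mul_of_nonneg_left
    (le_abs_self ((b - a) ⬝ᵥ (Bᵀ *ᵥ (Y - B *ᵥ a)))) (by positivity : 0 ≤ 2 * c)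
  have hscaled : δ * (2 * P b) ≤ δ * (P (b - a) + 2 * P a) := by linarith
  exact le_of_mul_le_mul_left hscaled hδ

lemma sum_filter_eq_zero_le_three_mul {V ι : Type*} [AddCommGroup V]
    (N : V → ι → ℝ) (hN_add : ∀ x y q, N (x + y) q ≤ N x q + N y q)
    (hN_neg : ∀ x q, N (-x) q = N x q) (Q : Finset ι) (a b : V)
    (hbound : 2 * ∑ q ∈ Q, N b q ≤ ∑ q ∈ Q, N (b - a) q + 2 * ∑ q ∈ Q, N a q) :
    ∑ q ∈ Q.filter (fun q => N a q = 0), N (a - b) q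
      ≤ 3 * ∑ q ∈ Q.filter (fun q => N a q ≠ 0), N (a - b) q := by
  have hsymm : ∀ q, N (b - a) q = N (a - b) q := fun q => by rw [← hN_neg, neg_sub]
  simp only [hsymm] at hbound
  rw [← sum_filter_add_sum_filter_not Q (fun q => N a q = 0) (N b),
    ← sum_filter_add_sum_filter_not Q (fun q => N a q = 0) (N (a - b)),
    ← sum_filter_add_sum_filter_not Q (fun q => N a q = 0) (N a)] at hbound
  have hzero : ∑ q ∈ Q.filter (fun q => N a q = 0), N a q = 0 :=
    sum_eq_zero fun q hq => (mem_filter.mp hq).2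
  have hoff : ∑ q ∈ Q.filter (fun q => N a q = 0), N (a - b) q
      ≤ ∑ q ∈ Q.filter (fun q => N a q = 0), N b q := by
    refine sum_le_sum fun q hq => ?_
    have := hN_add b (-a) q
    rw [hN_neg, (mem_filter.mp hq).2, ← sub_eq_add_neg, hsymm] at this
    linarith
  have hon : ∑ q ∈ Q.filter (fun q => ¬N a q = 0), N a q
      ≤ ∑ q ∈ Q.filter (fun q => ¬N a q = 0), (N b q + N (a - b) q) :=
    sum_le_sum fun q _ => by simpa using hN_add b (a - b) q
  rw [sum_add_distrib] at hon
  linarith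

theorem stmt_17_general (p M d n : ℕ)
    (B : Matrix (Fin n) (Fin p × Fin (M * d + 1)) ℝ) (Y : Fin n → ℝ)
    (δ : ℝ) (hδ : 0 < δ)
    (a ahat : Fin p × Fin (M * d + 1) → ℝ)
    (hmin : ∀ α : Fin p × Fin (M * d + 1) → ℝ,
      (n : ℝ)⁻¹ * ∑ i, (Y i - B.mulVec ahat i) ^ 2
          + 2 * δ * blockNormP p (M * d) d M ahat
        ≤ (n : ℝ)⁻¹ * ∑ i, (Y i - B.mulVec α i) ^ 2
          + 2 * δ * blockNormP p (M * d) d M α)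
    (hip : (2 / (n : ℝ)) * |(ahat - a) ⬝ᵥ (B.transpose.mulVec (Y - B.mulVec a))|
        ≤ δ * blockNormP p (M * d) d M (ahat - a)) :
    ∑ q ∈ (Finset.univ ×ˢ Finset.range (M + 1)).filter
        (fun q : Fin p × ℕ => blockAt p (M * d) d a q.1 q.2 = 0),
        blockAt p (M * d) d (a - ahat) q.1 q.2
      ≤ 3 * ∑ q ∈ (Finset.univ ×ˢ Finset.range (M + 1)).filter
          (fun q : Fin p × ℕ => blockAt p (M * d) d a q.1 q.2 ≠ 0),
          blockAt p (M * d) d (a - ahat) q.1 q.2 := by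
  have hbound := two_mul_penalty_le_of_minimizer B Y (blockNormP p (M * d) d M)
    (inv_nonneg.mpr n.cast_nonneg) hδ a ahat (hmin a) (by rwa [← div_eq_mul_inv])
  simp only [blockNormP, ← sum_product'] at hbound
  exact sum_filter_eq_zero_le_three_mul
    (fun x (q : Fin p × ℕ) => blockAt p (M * d) d x q.1 q.2)
    (fun x y q => blockAt_add_le p (M * d) d x y q.1 q.2)
    (fun x q => blockAt_neg p (M * d) d x q.1 q.2) _ a ahat hbound

/-- **Cone condition for the block-LASSO minimizer** (inequality (6.11)).
If `â` minimizes `n⁻¹‖Y − Bα‖₂² + 2δ̂‖α‖_block` and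
`(2/n)|⟨â − a, Bᵀ(Y − Ba)⟩| ≤ δ̂‖â − a‖_block`, then
`∑_{(j,l)∉J₀} ‖(a−â)_{jl}‖₂ ≤ 3 ∑_{(j,l)∈J₀} ‖(a−â)_{jl}‖₂`, where `J₀` is the
set of nonzero blocks of `a`. -/
theorem stmt_17 (p M d n : ℕ) (hd : 1 ≤ d) (hn : 1 ≤ n)
    (B : Matrix (Fin n) (Fin p × Fin (M * d + 1)) ℝ) (Y : Fin n → ℝ)
    (δ : ℝ) (hδ : 0 < δ)
    (a ahat : Fin p × Fin (M * d + 1) → ℝ)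
    (hmin : ∀ α : Fin p × Fin (M * d + 1) → ℝ,
      (n : ℝ)⁻¹ * ∑ i, (Y i - B.mulVec ahat i) ^ 2
          + 2 * δ * blockNormP p (M * d) d M ahat
        ≤ (n : ℝ)⁻¹ * ∑ i, (Y i - B.mulVec α i) ^ 2
          + 2 * δ * blockNormP p (M * d) d M α)
    (hip : (2 / (n : ℝ)) * |(ahat - a) ⬝ᵥ (B.transpose.mulVec (Y - B.mulVec a))|
        ≤ δ * blockNormP p (M * d) d M (ahat - a)) :
    ∑ q ∈ (Finset.univ ×ˢ Finset.range (M + 1)).filter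
        (fun q : Fin p × ℕ => blockAt p (M * d) d a q.1 q.2 = 0),
        blockAt p (M * d) d (a - ahat) q.1 q.2
      ≤ 3 * ∑ q ∈ (Finset.univ ×ˢ Finset.range (M + 1)).filter
          (fun q : Fin p × ℕ => blockAt p (M * d) d a q.1 q.2 ≠ 0),
          blockAt p (M * d) d (a - ahat) q.1 q.2 :=
  stmt_17_general p M d n B Y δ hδ a ahat hmin hip
end
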